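/- Let S1, S2 be equivalence relations on a set V, X ⊆ V with S1∖X = S1, and let x, y ∉ X with x ≠ y. If (x,y) ∈ S1 ⊔ S2, then every alternating chain witnessing this membership avoids X; consequently (x,y) ∈ S1 ⊔ (S2∖X). -/

import Mathlib

/-- The restriction `S∖X`: relates `a` and `b` iff `a = b`, or `(a,b) ∈ S` with `a ∉ X`, `b ∉ X`. -/
def Setoid.restrict {V : Type*} (S : Setoid V) (X : Set V) : Setoid V where
  r a b := a = b ∨ (S.r a b ∧ a ∉ X ∧ b ∉ X)
  iseqv := by
    constructor
    · intro a; exact Or.inl rfl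
    · rintro a b (rfl | ⟨h, ha, hb⟩)
      · exact Or.inl rfl
      · exact Or.inr ⟨S.symm h, hb, ha⟩
    · rintro a b c (rfl | ⟨h, ha, hb⟩) (rfl | ⟨h', hb', hc⟩)
      · exact Or.inl rfl
      · exact Or.inr ⟨h', hb', hc⟩
      · exact Or.inr ⟨h, ha, hb⟩
      · exact Or.inr ⟨S.trans h h', ha, hc⟩

/-!
Put `J = S1 ⊔ S2∖X`; like `S1`, it relates no point of `X` to another point. In a chain
for `S1 ⊔ S2` a point of `X` can therefore only sit between two `S2`-steps, which merge.
Formally: "`S2`, or `S2`-step out of `X`, `J`-step, `S2`-step back" is already an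
equivalence relation containing `S1` and `S2`, and outside `X` it is contained in `J`.
-/

namespace Setoid

variable {V : Type*} {R T : Setoid V} {X : Set V}

theorem restrict_mono {S S' : Setoid V} (h : S ≤ S') : S.restrict X ≤ S'.restrict X := by
  rintro a b (rfl | ⟨hab, ha, hb⟩)
  exacts [Or.inl rfl, Or.inr ⟨h hab, ha, hb⟩]

theorem le_restrict_top_of_restrict_eq {S : Setoid V} (h : S.restrict X = S) :
    S ≤ (⊤ : Setoid V).restrict X :=
  h ▸ restrict_mono le_top

/-- Transitive because a `T`-step between two points outside `X` is an `R`-step,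
so two detours compose to one. -/
def detour (hTR : T.restrict X ≤ R) : Setoid V where
  r a b := T a b ∨ ∃ c d, c ∉ X ∧ d ∉ X ∧ T a c ∧ R c d ∧ T d b
  iseqv := by
    refine ⟨fun a => Or.inl (T.refl a), ?_, ?_⟩
    · rintro a b (hab | ⟨c, d, hc, hd, hac, hcd, hdb⟩)
      exacts [Or.inl (T.symm hab),
        Or.inr ⟨d, c, hd, hc, T.symm hdb, R.symm hcd, T.symm hac⟩]
    · rintro a b e (hab | ⟨c, d, hc, hd, hac, hcd, hdb⟩)
        (hbe | ⟨c', d', hc', hd', hbc', hcd', hde⟩)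
      · exact Or.inl (T.trans hab hbe)
      · exact Or.inr ⟨c', d', hc', hd', T.trans hab hbc', hcd', hde⟩
      · exact Or.inr ⟨c, d, hc, hd, hac, hcd, T.trans hdb hbe⟩
      · have hdc' : R d c' := hTR (Or.inr ⟨T.trans hdb hbc', hd, hc'⟩)
        exact Or.inr ⟨c, d', hc, hd', hac, R.trans hcd (R.trans hdc' hcd'), hde⟩

theorem sup_le_detour (hR : R ≤ (⊤ : Setoid V).restrict X) (hTR : T.restrict X ≤ R) :
    R ⊔ T ≤ detour hTR := by
  refine sup_le ?_ fun a b hab => Or.inl hab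
  intro a b hab
  rcases hR hab with rfl | ⟨-, ha, hb⟩
  exacts [(detour hTR).refl a, Or.inr ⟨a, b, ha, hb, T.refl a, hab, T.refl b⟩]

theorem rel_of_sup_rel (hR : R ≤ (⊤ : Setoid V).restrict X) (hTR : T.restrict X ≤ R)
    {x y : V} (hx : x ∉ X) (hy : y ∉ X) (hxy : (R ⊔ T) x y) : R x y := by
  have outside {a b : V} (ha : a ∉ X) (hb : b ∉ X) (hab : T a b) : R a b :=
    hTR (Or.inr ⟨hab, ha, hb⟩)
  rcases sup_le_detour hR hTR hxy with hxy | ⟨c, d, hc, hd, hxc, hcd, hdy⟩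
  exacts [outside hx hy hxy, R.trans (outside hx hc hxc) (R.trans hcd (outside hd hy hdy))]

end Setoid

theorem stmt7_general {V : Type*} (S1 S2 : Setoid V) (X : Set V) (h : S1.restrict X = S1)
    (x y : V) (hx : x ∉ X) (hy : y ∉ X) (hmem : (S1 ⊔ S2).r x y) :
    (S1 ⊔ (S2.restrict X)).r x y := by
  have hJ : S1 ⊔ S2.restrict X ≤ (⊤ : Setoid V).restrict X :=
    sup_le (Setoid.le_restrict_top_of_restrict_eq h) (Setoid.restrict_mono le_top)
  have hle : S1 ⊔ S2 ≤ (S1 ⊔ S2.restrict X) ⊔ S2 :=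
    sup_le_sup_right le_sup_left S2
  exact Setoid.rel_of_sup_rel hJ le_sup_right hx hy (hle hmem)

theorem stmt7 {V : Type*} (S1 S2 : Setoid V) (X : Set V) (h : S1.restrict X = S1)
    (x y : V) (hx : x ∉ X) (hy : y ∉ X) (hxy : x ≠ y) (hmem : (S1 ⊔ S2).r x y) :
    (S1 ⊔ (S2.restrict X)).r x y :=
  stmt7_general S1 S2 X h x y hx hy hmem
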